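/- arXiv:1810.09383 — 3 statements merged into one kernel-verified Lean document; each statement's English description precedes it below -/
import Mathlib

section
/- Let I be an ideal on ℕ (a family of subsets of ℕ closed under taking subsets and finite unions). Suppose there exists an uncountable family 𝒜 of subsets of ℕ such that no member of 𝒜 belongs to I, while the intersection of any two distinct members of 𝒜 belongs to I. Then the quotient Banach space ℓ∞/c_{0,I} is not isomorphic to a (closed) subspace of ℓ∞; that is, there is no bounded linear map T from ℓ∞/c_{0,I} into ℓ∞ for which there exists c > 0 with ‖x‖ ≤ c·‖T x‖ for all x. -/
open scoped ENNReal
set_option synthInstance.maxHeartbeats 1000000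
set_option maxHeartbeats 1000000

noncomputable section

/-- The Banach space `ℓ∞` of bounded real sequences with the supremum norm. -/
abbrev LInf : Type := lp (fun _ : ℕ => ℝ) ∞

/-- An ideal on `ℕ`: a family of subsets of `ℕ` closed under taking subsets
and finite unions (in particular it contains the empty union `∅`). -/
structure SetIdeal where
  sets : Set (Set ℕ)
  subset_mem : ∀ ⦃A B : Set ℕ⦄, A ∈ sets → B ⊆ A → B ∈ sets
  union_mem : ∀ ⦃A B : Set ℕ⦄, A ∈ sets → B ∈ sets → A ∪ B ∈ sets
  empty_mem : ∅ ∈ sets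

/-- The set of bounded sequences converging to `0` along the ideal `I`:
for every `ε > 0` the set `{n | ε ≤ |x n|}` belongs to `I`. -/
def c0Set (I : SetIdeal) : Set LInf :=
  {x | ∀ ε : ℝ, 0 < ε → {n : ℕ | ε ≤ |x n|} ∈ I.sets}

/-- `c_{0,I}`, as a linear subspace of `ℓ∞`. -/
def c0I (I : SetIdeal) : Submodule ℝ LInf where
  carrier := c0Set I
  zero_mem' := by
    intro ε hε
    have h : {n : ℕ | ε ≤ |(0 : LInf) n|} = (∅ : Set ℕ) := by
      ext n
      simp [lp.coeFn_zero, hε.not_ge]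
    rw [h]; exact I.empty_mem
  add_mem' := by
    intro x y hx hy ε hε
    refine I.subset_mem (I.union_mem (hx (ε / 2) (by linarith)) (hy (ε / 2) (by linarith))) ?_
    intro n hn
    simp only [Set.mem_setOf_eq, lp.coeFn_add, Pi.add_apply] at hn
    by_contra hmem
    simp only [Set.mem_union, Set.mem_setOf_eq, not_or, not_le] at hmem
    have := abs_add_le (x n) (y n)
    linarith [hn, hmem.1, hmem.2]
  smul_mem' := by
    intro c x hx ε hε
    rcases eq_or_ne c 0 with rfl | hc
    · have h : {n : ℕ | ε ≤ |((0 : ℝ) • x) n|} = (∅ : Set ℕ) := by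
        ext n
        simp [lp.coeFn_smul, hε.not_ge]
      rw [h]; exact I.empty_mem
    · have hcpos : 0 < |c| := abs_pos.mpr hc
      refine I.subset_mem (hx (ε / |c|) (by positivity)) ?_
      intro n hn
      simp only [Set.mem_setOf_eq, lp.coeFn_smul, Pi.smul_apply, smul_eq_mul, abs_mul] at hn
      simp only [Set.mem_setOf_eq]
      rw [div_le_iff₀ hcpos]
      linarith [hn]

/-! The classes `[χ_A]`, `A ∈ 𝒜`, all have quotient norm `1`, while any combination
`∑ s_A [χ_A]` of finitely many of them with `|s_A| ≤ 1` has quotient norm at most `1`, because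
the sets overlap only on a set in `I`. If `T` were an isomorphic embedding with constant `c`,
every `T[χ_A]` would have a coordinate of modulus at least `1/(2c)`; choosing `s_A` as the sign
of that coordinate shows that a single coordinate can serve at most `2c‖T‖` of them. So `𝒜`
would be a countable union of finite sets. -/

theorem SetIdeal.biUnion_mem (I : SetIdeal) {ι : Type*} (s : Finset ι) {f : ι → Set ℕ}
    (h : ∀ i ∈ s, f i ∈ I.sets) : (⋃ i ∈ s, f i) ∈ I.sets := by
  classical
  induction s using Finset.induction with
  | empty => simpa using I.empty_mem
  | insert a s _ ih =>
    rw [Finset.set_biUnion_insert]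
    exact I.union_mem (h a (Finset.mem_insert_self a s))
      (ih fun i hi => h i (Finset.mem_insert_of_mem hi))

theorem Set.finite_of_forall_abs_sum_smul_le {ι E : Type*} [AddCommGroup E] [Module ℝ E]
    (φ : E →ₗ[ℝ] ℝ) (e : ι → E) {S : Set ι} {δ K : ℝ} (hδ : 0 < δ)
    (he : ∀ i ∈ S, δ ≤ |φ (e i)|)
    (hK : ∀ (F : Finset ι) (s : ι → ℝ), ↑F ⊆ S → (∀ i, |s i| ≤ 1) →
      |φ (∑ i ∈ F, s i • e i)| ≤ K) :
    S.Finite := by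
  by_contra hS
  obtain ⟨F, hFS, hcard⟩ := Set.Infinite.exists_subset_card_eq hS (⌊K / δ⌋₊ + 1)
  have hsum : F.card * δ ≤ |φ (∑ i ∈ F, (SignType.sign (φ (e i)) : ℝ) • e i)| := by
    simp only [map_sum, map_smul, smul_eq_mul, sign_mul_self]
    calc F.card * δ = ∑ i ∈ F, δ := by simp
      _ ≤ ∑ i ∈ F, |φ (e i)| := Finset.sum_le_sum fun i hi => he i (hFS hi)
      _ ≤ _ := le_abs_self _
  have hbound := hsum.trans (hK F _ hFS fun i => by cases SignType.sign (φ (e i)) <;> simp)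
  rw [hcard, ← le_div_iff₀ hδ] at hbound
  exact (Nat.lt_floor_add_one (K / δ)).not_ge (by exact_mod_cast hbound)

namespace LInf

def indicator (B : Set ℕ) (x : LInf) : LInf :=
  ⟨B.indicator x, (lp.memℓp x).mono' fun n => norm_indicator_le_norm_self x n⟩

theorem exists_lt_abs_apply_of_lt_norm {x : LInf} {r : ℝ} (hr : r < ‖x‖) :
    ∃ n, r < |x n| := by
  by_contra! h
  exact hr.not_ge (lp.norm_le_of_forall_le' r h)

@[simp]
theorem indicator_apply (B : Set ℕ) (x : LInf) (n : ℕ) : indicator B x n = B.indicator x n :=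
  rfl

theorem indicator_mem_c0I {I : SetIdeal} {B : Set ℕ} (hB : B ∈ I.sets) (x : LInf) :
    indicator B x ∈ c0I I := fun ε hε =>
  I.subset_mem hB fun n hn => by
    by_contra hnB
    simp [hnB, hε.not_ge] at hn

end LInf

section Quotient

variable (I : SetIdeal)

theorem le_norm_mk_of_forall_mem_le_abs {A : Set ℕ} (hA : A ∉ I.sets) {x : LInf} {r : ℝ}
    (hx : ∀ n ∈ A, r ≤ |x n|) : r ≤ ‖(Submodule.Quotient.mk x : LInf ⧸ c0I I)‖ := by
  by_contra! hlt
  obtain ⟨m, hm, hm_lt⟩ := Submodule.Quotient.norm_mk_lt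
    (Submodule.Quotient.mk x : LInf ⧸ c0I I) (sub_pos.mpr hlt)
  have hxm : x - m ∈ c0I I := by
    rw [← Submodule.Quotient.eq]; exact hm.symm
  refine hA (I.subset_mem (hxm (r - ‖m‖) (by linarith)) fun n hn => ?_)
  have hmn : |m n| ≤ ‖m‖ := by
    simpa using lp.norm_apply_le_norm ENNReal.top_ne_zero m n
  have := abs_sub_abs_le_abs_sub (x n) (m n)
  change r - ‖m‖ ≤ |x n - m n|
  linarith [hx n hn]

theorem norm_mk_le_of_forall_notMem_abs_le {B : Set ℕ} (hB : B ∈ I.sets) {x : LInf} {r : ℝ}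
    (hr : 0 ≤ r) (hx : ∀ n ∉ B, |x n| ≤ r) :
    ‖(Submodule.Quotient.mk x : LInf ⧸ c0I I)‖ ≤ r := by
  have hmk : (Submodule.Quotient.mk x : LInf ⧸ c0I I) =
      Submodule.Quotient.mk (x - LInf.indicator B x) := by
    rw [Submodule.Quotient.eq, sub_sub_cancel]
    exact LInf.indicator_mem_c0I hB x
  rw [hmk]
  refine (Submodule.Quotient.norm_mk_le _ _).trans (lp.norm_le_of_forall_le hr fun n => ?_)
  by_cases hn : n ∈ B <;> simp [hn, hr, hx n]

open Classical in
theorem abs_sum_smul_indicator_one_apply_le (F : Finset (Set ℕ)) {s : Set ℕ → ℝ}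
    (hs : ∀ A, |s A| ≤ 1) (n : ℕ) :
    |(∑ A ∈ F, s A • LInf.indicator A 1) n| ≤ {A ∈ F | n ∈ A}.card := by
  rw [← Finset.sum_boole, lp.coeFn_sum, Finset.sum_apply]
  refine (Finset.abs_sum_le_sum_abs _ _).trans (Finset.sum_le_sum fun A _ => ?_)
  by_cases hn : n ∈ A <;> simp [hn, hs A]

theorem norm_sum_smul_mk_indicator_one_le_one (F : Finset (Set ℕ)) {s : Set ℕ → ℝ}
    (hs : ∀ A, |s A| ≤ 1) (hF : (F : Set (Set ℕ)).Pairwise fun A B => A ∩ B ∈ I.sets) :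
    ‖∑ A ∈ F, s A • (Submodule.Quotient.mk (LInf.indicator A 1) : LInf ⧸ c0I I)‖ ≤ 1 := by
  rw [show ∑ A ∈ F, s A • (Submodule.Quotient.mk (LInf.indicator A 1) : LInf ⧸ c0I I) =
      Submodule.Quotient.mk (∑ A ∈ F, s A • LInf.indicator A 1) by
    simp only [← Submodule.mkQ_apply, map_sum, map_smul]]
  refine norm_mk_le_of_forall_notMem_abs_le I
    (I.biUnion_mem F.offDiag (f := fun p => p.1 ∩ p.2) fun p hp => ?_) zero_le_one
    fun n hn => ?_
  · obtain ⟨h1, h2, hne⟩ := Finset.mem_offDiag.mp hp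
    exact hF h1 h2 hne
  · classical
    refine (abs_sum_smul_indicator_one_apply_le F hs n).trans ?_
    refine Nat.cast_le_one.mpr (Finset.card_le_one.mpr fun A hA B hB => ?_)
    rw [Finset.mem_filter] at hA hB
    by_contra hne
    exact hn (Set.mem_biUnion (x := (A, B)) (Finset.mem_offDiag.mpr ⟨hA.1, hB.1, hne⟩)
      ⟨hA.2, hB.2⟩)

end Quotient

/-- **Theorem A.** If there is an uncountable family `𝒜` of sets not in the
ideal `I` whose pairwise intersections lie in `I`, then the quotient
`ℓ∞ / c_{0,I}` is not isomorphic to a subspace of `ℓ∞`. -/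
theorem quotient_not_embed_in_linf (I : SetIdeal) (𝒜 : Set (Set ℕ))
    (h𝒜 : ¬𝒜.Countable)
    (hA : ∀ A ∈ 𝒜, A ∉ I.sets)
    (hAB : ∀ A ∈ 𝒜, ∀ B ∈ 𝒜, A ≠ B → A ∩ B ∈ I.sets) :
    ¬∃ (T : (LInf ⧸ c0I I) →L[ℝ] LInf) (c : ℝ), 0 < c ∧
      ∀ x : LInf ⧸ c0I I, ‖x‖ ≤ c * ‖T x‖ := by
  rintro ⟨T, c, hc, hTc⟩
  let e : Set ℕ → LInf ⧸ c0I I := fun A => Submodule.Quotient.mk (LInf.indicator A 1)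
  let δ := (2 * c)⁻¹
  have hδ : 0 < δ := by positivity
  have hcover : 𝒜 ⊆ ⋃ n, {A ∈ 𝒜 | δ < |T (e A) n|} := by
    intro A hA𝒜
    have hone : 1 ≤ c * ‖T (e A)‖ := (le_norm_mk_of_forall_mem_le_abs I (hA A hA𝒜)
      fun n hn => by simp [hn]).trans (hTc (e A))
    have hδT : δ < ‖T (e A)‖ := by
      rw [inv_lt_iff_one_lt_mul₀' (by positivity)]
      linarith
    obtain ⟨n, hn⟩ := LInf.exists_lt_abs_apply_of_lt_norm hδT
    exact Set.mem_iUnion_of_mem n ⟨hA𝒜, hn⟩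
  have hfin (n : ℕ) : {A ∈ 𝒜 | δ < |T (e A) n|}.Finite := by
    refine Set.finite_of_forall_abs_sum_smul_le (lp.evalCLM ℝ _ ∞ n ∘L T).toLinearMap e
      (K := ‖T‖) hδ (fun A hA => hA.2.le) fun F s hF hs => ?_
    calc |T (∑ A ∈ F, s A • e A) n| ≤ ‖T (∑ A ∈ F, s A • e A)‖ := by
          simpa using lp.norm_apply_le_norm ENNReal.top_ne_zero (T (∑ A ∈ F, s A • e A)) n
      _ ≤ ‖T‖ * ‖∑ A ∈ F, s A • e A‖ := T.le_opNorm _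
      _ ≤ ‖T‖ * 1 := by
          gcongr
          exact norm_sum_smul_mk_indicator_one_le_one I F hs
            (Set.Pairwise.mono (fun A hA => (hF hA).1) hAB)
      _ = ‖T‖ := mul_one _
  exact h𝒜 ((Set.countable_iUnion fun n => (hfin n).countable).mono hcover)
end
end

section
/- Let I be an ideal on ℕ and suppose 𝒜 is a family of subsets of ℕ such that no member of 𝒜 belongs to I and the intersection of any two distinct members of 𝒜 belongs to I. Then the closed linear span in ℓ∞/c_{0,I} of the cosets {π(𝟙_A) : A ∈ 𝒜} is isometrically isomorphic to c₀(𝒜), the space of functions on 𝒜 vanishing at infinity with the supremum norm; in particular ℓ∞/c_{0,I} contains an isometric copy of c₀(𝒜). -/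
open scoped ENNReal
set_option synthInstance.maxHeartbeats 1000000
set_option maxHeartbeats 1000000

noncomputable section

/-- The indicator sequence `𝟙_A ∈ ℓ∞` of a set `A ⊆ ℕ`. -/
def indicatorSeq (A : Set ℕ) : LInf :=
  ⟨A.indicator (fun _ => (1 : ℝ)), memℓp_infty ⟨1, by
    rintro r ⟨n, rfl⟩
    by_cases h : n ∈ A <;> simp [Set.indicator, h]⟩⟩

/-- A copy of `Γ` equipped with the discrete topology. -/
def Disc (Γ : Type*) : Type _ := Γ

instance (Γ : Type*) : TopologicalSpace (Disc Γ) := ⊥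

instance (Γ : Type*) : DiscreteTopology (Disc Γ) := ⟨rfl⟩

/-- `c₀(Γ)`: the Banach space of real-valued functions on `Γ` vanishing at
infinity (equivalently, `{γ | ε ≤ |f γ|}` is finite for every `ε > 0`),
with the supremum norm. -/
abbrev czero (Γ : Type*) : Type _ := ZeroAtInftyContinuousMap (Disc Γ) ℝ

/-! For `g : 𝒜 →₀ ℝ` the sequence `x = ∑ g(A) 𝟙_A` equals `g(A)` on `A` outside the finite union
of the pairwise intersections of the members of the support, a set in `I`. Cutting that set away
shows `‖π x‖ ≤ sup |g|`; conversely, since `A ∉ I`, every `y ∈ c_{0,I}` is small at some point of `A`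
outside that set, so `‖x - y‖ ≥ |g(A)|`. Hence `g ↦ π x` is norm preserving on the finitely
supported functions, which are dense in `c₀(𝒜)`, and it extends to an isometry of `c₀(𝒜)` onto
the closure of the span of the cosets. -/

open scoped ZeroAtInfty

namespace ZeroAtInftyContinuousMap

variable {α β : Type*} [TopologicalSpace α] [SeminormedAddCommGroup β]

theorem norm_le_iff {f : C₀(α, β)} {C : ℝ} (hC : 0 ≤ C) : ‖f‖ ≤ C ↔ ∀ x, ‖f x‖ ≤ C := by
  rw [← norm_toBCF_eq_norm]
  exact BoundedContinuousFunction.norm_le hC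

theorem norm_apply_le (f : C₀(α, β)) (x : α) : ‖f x‖ ≤ ‖f‖ :=
  norm_toBCF_eq_norm (f := f) ▸ f.toBCF.norm_coe_le_norm x

end ZeroAtInftyContinuousMap

namespace czero

variable (Γ : Type*)

def ofFinsupp : (Γ →₀ ℝ) →ₗ[ℝ] czero Γ where
  toFun g :=
    { toFun := fun γ => g γ
      continuous_toFun := continuous_of_discreteTopology
      zero_at_infty' := by
        rw [Filter.cocompact_eq_cofinite]
        exact tendsto_const_nhds.congr'
          (g.support.finite_toSet.subset fun γ hγ => Finsupp.mem_support_iff.mpr (Ne.symm hγ)) }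
  map_add' _ _ := rfl
  map_smul' _ _ := rfl

variable {Γ}

@[simp] theorem ofFinsupp_apply (g : Γ →₀ ℝ) (γ : Disc Γ) : ofFinsupp Γ g γ = g γ := rfl

theorem denseRange_ofFinsupp : DenseRange (ofFinsupp Γ) := by
  refine Metric.denseRange_iff.mpr fun f ε hε => ?_
  set F := {γ : Disc Γ | ε / 2 ≤ ‖f γ‖}
  have hF : F.Finite := by
    have hf :=
      Metric.tendsto_nhds.mp (ZeroAtInftyContinuousMapClass.zero_at_infty f) _ (half_pos hε)
    rw [Filter.cocompact_eq_cofinite, Filter.eventually_cofinite] at hf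
    exact hf.subset fun γ (hγ : ε / 2 ≤ ‖f γ‖) => by simpa [dist_zero_right] using hγ
  let g : Γ →₀ ℝ := Finsupp.ofSupportFinite (F.indicator f) (hF.subset Set.support_indicator_subset)
  refine ⟨g, (dist_eq_norm f _).trans_lt (lt_of_le_of_lt ?_ (half_lt_self hε))⟩
  refine (ZeroAtInftyContinuousMap.norm_le_iff (half_pos hε).le).mpr fun γ => ?_
  have hgγ : g γ = F.indicator f γ := rfl
  rw [ZeroAtInftyContinuousMap.sub_apply, ofFinsupp_apply, hgγ]
  by_cases hγ : γ ∈ F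
  · simpa [Set.indicator_of_mem hγ] using (half_pos hε).le
  · rw [Set.indicator_of_notMem hγ, sub_zero]
    exact (not_le.mp hγ).le

end czero

theorem LinearMap.nonempty_linearIsometryEquiv_topologicalClosure_range {𝕜 M E F : Type*}
    [NormedField 𝕜] [AddCommGroup M] [Module 𝕜 M]
    [NormedAddCommGroup E] [NormedSpace 𝕜 E] [CompleteSpace E]
    [NormedAddCommGroup F] [NormedSpace 𝕜 F] [CompleteSpace F]
    (J : M →ₗ[𝕜] E) (T : M →ₗ[𝕜] F) (hJ : DenseRange J) (hT : ∀ m, ‖T m‖ = ‖J m‖) :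
    Nonempty (E ≃ₗᵢ[𝕜] (LinearMap.range T).topologicalClosure) := by
  let T' : M →ₗ[𝕜] (LinearMap.range T).topologicalClosure :=
    T.codRestrict _ fun m => Submodule.le_topologicalClosure _ (LinearMap.mem_range_self T m)
  have hT' : DenseRange T' := by
    refine Subtype.dense_iff.mpr ?_
    rw [← Set.range_comp]
    exact (Submodule.topologicalClosure_coe _).le
  exact ⟨(LinearEquiv.refl 𝕜 M).extendOfIsometry J T' hJ hT' hT⟩

namespace SetIdeal

variable (I : SetIdeal)

theorem biUnion_finset_mem {ι : Type*} (s : Finset ι) {f : ι → Set ℕ}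
    (h : ∀ i ∈ s, f i ∈ I.sets) : (⋃ i ∈ s, f i) ∈ I.sets := by
  classical
  induction s using Finset.induction_on with
  | empty => simpa using I.empty_mem
  | insert i s _ ih =>
    rw [Finset.set_biUnion_insert]
    exact I.union_mem (h i (s.mem_insert_self i)) (ih fun j hj => h j (s.mem_insert_of_mem hj))

end SetIdeal

theorem indicatorSeq_apply_of_mem {A : Set ℕ} {n : ℕ} (hn : n ∈ A) : indicatorSeq A n = 1 :=
  Set.indicator_of_mem hn (fun _ => (1 : ℝ))

theorem indicatorSeq_apply_of_notMem {A : Set ℕ} {n : ℕ} (hn : n ∉ A) : indicatorSeq A n = 0 :=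
  Set.indicator_of_notMem hn (fun _ => (1 : ℝ))

section Quotient

variable {I : SetIdeal}

theorem abs_apply_le_norm (x : LInf) (n : ℕ) : |x n| ≤ ‖x‖ :=
  lp.norm_apply_le_norm ENNReal.top_ne_zero x n

theorem mem_c0I_of_forall_notMem {x : LInf} {S : Set ℕ} (hS : S ∈ I.sets)
    (hx : ∀ n ∉ S, x n = 0) : x ∈ c0I I := fun ε hε =>
  I.subset_mem hS fun n (hn : ε ≤ |x n|) => by
    by_contra h
    rw [hx n h, abs_zero] at hn
    exact hn.not_gt hε

variable (I) in
theorem isClosed_c0I : IsClosed (c0I I : Set LInf) := by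
  refine isClosed_of_closure_subset fun x hx ε hε => ?_
  obtain ⟨y, hy, hxy⟩ := Metric.mem_closure_iff.mp hx (ε / 2) (half_pos hε)
  refine I.subset_mem (hy (ε / 2) (half_pos hε)) fun n (hn : ε ≤ |x n|) => ?_
  have hdist : |x n - y n| < ε / 2 :=
    (abs_apply_le_norm (x - y) n).trans_lt (dist_eq_norm x y ▸ hxy)
  show ε / 2 ≤ |y n|
  linarith [abs_sub_abs_le_abs_sub (x n) (y n)]

theorem norm_mkQ_le_of_forall_notMem {x : LInf} {S : Set ℕ} {C : ℝ} (hS : S ∈ I.sets)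
    (hC : 0 ≤ C) (hx : ∀ n ∉ S, |x n| ≤ C) : ‖(c0I I).mkQ x‖ ≤ C := by
  have hmem : indicatorSeq S * x ∈ c0I I :=
    mem_c0I_of_forall_notMem hS fun n hn => by
      simp [lp.infty_coeFn_mul, indicatorSeq_apply_of_notMem hn]
  have hmk : (c0I I).mkQ x = (c0I I).mkQ (x - indicatorSeq S * x) := by
    rw [map_sub, Submodule.mkQ_apply _ (indicatorSeq S * x),
      (Submodule.Quotient.mk_eq_zero _).2 hmem, sub_zero]
  rw [hmk]
  refine (Submodule.Quotient.norm_mk_le _ _).trans (lp.norm_le_of_forall_le hC fun n => ?_)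
  rw [lp.coeFn_sub, lp.infty_coeFn_mul, Pi.sub_apply, Pi.mul_apply, Real.norm_eq_abs]
  by_cases hn : n ∈ S
  · simpa [indicatorSeq_apply_of_mem hn] using hC
  · simpa [indicatorSeq_apply_of_notMem hn] using hx n hn

theorem le_norm_mkQ_of_forall_mem {x : LInf} {A S : Set ℕ} {c : ℝ} (hA : A ∉ I.sets)
    (hS : S ∈ I.sets) (hx : ∀ n ∈ A, n ∉ S → c ≤ |x n|) : c ≤ ‖(c0I I).mkQ x‖ := by
  rw [show ‖(c0I I).mkQ x‖ = Metric.infDist x (c0I I) from QuotientAddGroup.norm_mk x,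
    Metric.le_infDist ⟨0, (c0I I).zero_mem⟩]
  intro y (hy : y ∈ c0I I)
  refine le_of_forall_pos_lt_add fun ε hε => ?_
  obtain ⟨n, hnA, hn⟩ := Set.not_subset.mp
    fun hsub : A ⊆ S ∪ {n | ε ≤ |y n|} => hA (I.subset_mem (I.union_mem hS (hy ε hε)) hsub)
  simp only [Set.mem_union, Set.mem_ofPred_eq, not_or, not_le] at hn
  have hxy : |x n - y n| ≤ dist x y := dist_eq_norm x y ▸ abs_apply_le_norm (x - y) n
  linarith [hx n hnA hn.1, abs_sub_abs_le_abs_sub (x n) (y n)]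

end Quotient

section AlmostDisjoint

variable {ι : Type*} (A : ι → Set ℕ)

open Classical in
def overlap (s : Finset ι) : Set ℕ := ⋃ p ∈ s.offDiag, A p.1 ∩ A p.2

variable {A}

theorem overlap_mem {I : SetIdeal} (hA : Pairwise fun i j => A i ∩ A j ∈ I.sets)
    (s : Finset ι) : overlap A s ∈ I.sets := by
  classical
  exact I.biUnion_finset_mem _ fun p hp => hA (Finset.mem_offDiag.mp hp).2.2

theorem sum_smul_indicatorSeq_apply_of_mem {s : Finset ι} (c : ι → ℝ) {n : ℕ} {i : ι}
    (hn : n ∉ overlap A s) (hi : i ∈ s) (hni : n ∈ A i) :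
    (∑ j ∈ s, c j • indicatorSeq (A j)) n = c i := by
  classical
  rw [lp.coeFn_sum, Finset.sum_apply, Finset.sum_eq_single_of_mem i hi]
  · simp [indicatorSeq_apply_of_mem hni]
  · intro j hj hji
    have hnj : n ∉ A j := fun hnj =>
      hn (Set.mem_biUnion (x := (i, j)) (Finset.mem_offDiag.mpr ⟨hi, hj, hji.symm⟩) ⟨hni, hnj⟩)
    simp [indicatorSeq_apply_of_notMem hnj]

theorem sum_smul_indicatorSeq_apply_of_forall_notMem (s : Finset ι) (c : ι → ℝ) {n : ℕ}
    (hn : ∀ i ∈ s, n ∉ A i) : (∑ j ∈ s, c j • indicatorSeq (A j)) n = 0 := by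
  rw [lp.coeFn_sum, Finset.sum_apply]
  exact Finset.sum_eq_zero fun j hj => by simp [indicatorSeq_apply_of_notMem (hn j hj)]

end AlmostDisjoint

section Combination

variable {ι : Type*} (I : SetIdeal) (A : ι → Set ℕ)

def cosetCombination : (ι →₀ ℝ) →ₗ[ℝ] LInf ⧸ c0I I :=
  Finsupp.linearCombination ℝ fun i => (c0I I).mkQ (indicatorSeq (A i))

variable {I A}

theorem cosetCombination_apply (g : ι →₀ ℝ) :
    cosetCombination I A g = (c0I I).mkQ (∑ i ∈ g.support, g i • indicatorSeq (A i)) := by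
  simp [cosetCombination, Finsupp.linearCombination_apply, Finsupp.sum]

theorem abs_le_norm_cosetCombination (hdisj : Pairwise fun i j => A i ∩ A j ∈ I.sets)
    (g : ι →₀ ℝ) {i : ι} (hi : A i ∉ I.sets) : |g i| ≤ ‖cosetCombination I A g‖ := by
  by_cases hgi : i ∈ g.support
  · rw [cosetCombination_apply]
    refine le_norm_mkQ_of_forall_mem hi (overlap_mem hdisj g.support) fun n hni hn => ?_
    rw [sum_smul_indicatorSeq_apply_of_mem g hn hgi hni]
  · simp [Finsupp.notMem_support_iff.mp hgi]

theorem norm_cosetCombination_le (hdisj : Pairwise fun i j => A i ∩ A j ∈ I.sets)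
    (g : ι →₀ ℝ) {C : ℝ} (hC : 0 ≤ C) (hg : ∀ i, |g i| ≤ C) : ‖cosetCombination I A g‖ ≤ C := by
  rw [cosetCombination_apply]
  refine norm_mkQ_le_of_forall_notMem (overlap_mem hdisj g.support) hC fun n hn => ?_
  by_cases hcov : ∃ i ∈ g.support, n ∈ A i
  · obtain ⟨i, hi, hni⟩ := hcov
    rw [sum_smul_indicatorSeq_apply_of_mem g hn hi hni]
    exact hg i
  · push Not at hcov
    rw [sum_smul_indicatorSeq_apply_of_forall_notMem _ g hcov, abs_zero]
    exact hC

theorem norm_cosetCombination_eq (hA : ∀ i, A i ∉ I.sets)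
    (hdisj : Pairwise fun i j => A i ∩ A j ∈ I.sets) (g : ι →₀ ℝ) :
    ‖cosetCombination I A g‖ = ‖czero.ofFinsupp ι g‖ :=
  le_antisymm
    (norm_cosetCombination_le hdisj g (norm_nonneg _) fun i =>
      (czero.ofFinsupp ι g).norm_apply_le i)
    ((ZeroAtInftyContinuousMap.norm_le_iff (norm_nonneg _)).mpr fun i : ι =>
      abs_le_norm_cosetCombination hdisj g (hA i))

end Combination

/-- If no member of `𝒜` lies in `I` while pairwise intersections of members of
`𝒜` lie in `I`, then the closed linear span in `ℓ∞ / c_{0,I}` of the cosets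
`π 𝟙_A`, `A ∈ 𝒜`, is isometrically isomorphic to `c₀(𝒜)`. -/
theorem closed_span_indicator_cosets_isometric_czero (I : SetIdeal)
    (𝒜 : Set (Set ℕ))
    (hA : ∀ A ∈ 𝒜, A ∉ I.sets)
    (hAB : ∀ A ∈ 𝒜, ∀ B ∈ 𝒜, A ≠ B → A ∩ B ∈ I.sets) :
    Nonempty
      ((Submodule.span ℝ
          ((fun A : Set ℕ => (c0I I).mkQ (indicatorSeq A)) '' 𝒜)).topologicalClosure
        ≃ₗᵢ[ℝ] czero ↥𝒜) := by
  -- makes `ℓ∞ ⧸ c_{0,I}` a `NormedAddCommGroup`, as `LinearEquiv.extendOfIsometry` requires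
  have := isClosed_c0I I
  have hdisj : Pairwise fun A B : 𝒜 => (A : Set ℕ) ∩ B ∈ I.sets :=
    fun A B hne => hAB A A.2 B B.2 (Subtype.coe_injective.ne hne)
  rw [Set.image_eq_range, ← Finsupp.range_linearCombination]
  obtain ⟨e⟩ := (czero.ofFinsupp 𝒜).nonempty_linearIsometryEquiv_topologicalClosure_range
    (cosetCombination I Subtype.val) czero.denseRange_ofFinsupp
    (norm_cosetCombination_eq (fun A => hA A A.2) hdisj)
  exact ⟨e.symm⟩
end
end

section
/- If Γ is an uncountable set, then c₀(Γ) is not isomorphic to a subspace of ℓ∞: there is no bounded linear map T : c₀(Γ) → ℓ∞ for which there exists c > 0 with ‖x‖ ≤ c·‖T x‖ for all x ∈ c₀(Γ). -/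
/-! A bounded functional `φ` on `c₀(Γ)` has `φ e_γ ≠ 0` for only countably many `γ`: testing `φ`
on `∑_{γ ∈ s} sign (φ e_γ) • e_γ`, a vector of norm at most `1`, gives
`#{γ | δ ≤ |φ e_γ|} ≤ ‖φ‖ / δ`. Applied to the countably many coordinate functionals of `ℓ∞`,
this shows that a bounded `T : c₀(Γ) → ℓ∞` vanishes on all but countably many unit vectors `e_γ`,
so for uncountable `Γ` it is not even injective. -/

open scoped ENNReal
set_option synthInstance.maxHeartbeats 1000000
set_option maxHeartbeats 1000000

noncomputable section

open Finset
open scoped ZeroAtInfty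

namespace ZeroAtInftyContinuousMap

theorem coe_sum {α β ι : Type*} [TopologicalSpace α] [TopologicalSpace β] [AddCommMonoid β]
    [ContinuousAdd β] (s : Finset ι) (f : ι → C₀(α, β)) :
    ⇑(∑ i ∈ s, f i) = ∑ i ∈ s, ⇑(f i) :=
  map_sum (⟨⟨DFunLike.coe, coe_zero⟩, coe_add⟩ : C₀(α, β) →+ α → β) f s

variable {X : Type*} [TopologicalSpace X] [DiscreteTopology X]

open Classical in
def single (x : X) : C₀(X, ℝ) where
  toFun := Pi.single x 1
  continuous_toFun := continuous_of_discreteTopology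
  zero_at_infty' := HasCompactSupport.is_zero_at_infty <|
    HasCompactSupport.intro isCompact_singleton fun _ hy => Pi.single_eq_of_ne hy 1

open Classical in
theorem single_apply (x y : X) : single x y = (Pi.single x 1 : X → ℝ) y := rfl

theorem single_ne_zero (x : X) : single x ≠ 0 := fun h => by
  simpa [single_apply] using DFunLike.congr_fun h x

theorem norm_sum_smul_single_le {s : Finset X} {a : X → ℝ} (ha : ∀ x ∈ s, |a x| ≤ 1) :
    ‖∑ x ∈ s, a x • single x‖ ≤ 1 := by
  classical
  refine (BoundedContinuousFunction.norm_le zero_le_one).2 fun y => ?_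
  change |(∑ x ∈ s, a x • single x) y| ≤ 1
  by_cases hy : y ∈ s <;> simp [coe_sum, single_apply, Pi.single_apply, hy, ha]

theorem card_mul_le_norm_of_le_abs_apply_single (φ : C₀(X, ℝ) →L[ℝ] ℝ) {δ : ℝ} {s : Finset X}
    (hs : ∀ x ∈ s, δ ≤ |φ (single x)|) : #s * δ ≤ ‖φ‖ := by
  set v := ∑ x ∈ s, (SignType.sign (φ (single x)) : ℝ) • single x
  have hv : ‖v‖ ≤ 1 := norm_sum_smul_single_le fun x _ => by
    rcases SignType.sign (φ (single x)) with _ | _ | _ <;> simp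
  calc #s * δ = ∑ _x ∈ s, δ := by rw [sum_const, nsmul_eq_mul]
    _ ≤ ∑ x ∈ s, |φ (single x)| := sum_le_sum hs
    _ = φ v := by simp [v, map_sum, sign_mul_self]
    _ ≤ ‖φ v‖ := le_abs_self _
    _ ≤ ‖φ‖ * ‖v‖ := φ.le_opNorm v
    _ ≤ ‖φ‖ := mul_le_of_le_one_right (norm_nonneg φ) hv

theorem finite_setOf_le_abs_apply_single (φ : C₀(X, ℝ) →L[ℝ] ℝ) {δ : ℝ} (hδ : 0 < δ) :
    {x | δ ≤ |φ (single x)|}.Finite := by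
  by_contra hinf
  obtain ⟨s, hs, hcard⟩ := Set.Infinite.exists_subset_card_eq hinf (⌊‖φ‖ / δ⌋₊ + 1)
  have hle := card_mul_le_norm_of_le_abs_apply_single φ fun x hx => hs hx
  rw [hcard, ← le_div_iff₀ hδ] at hle
  exact (Nat.lt_floor_add_one (‖φ‖ / δ)).not_ge (mod_cast hle)

theorem countable_setOf_apply_single_ne_zero (φ : C₀(X, ℝ) →L[ℝ] ℝ) :
    {x | φ (single x) ≠ 0}.Countable := by
  have hcover : {x | φ (single x) ≠ 0} ⊆ ⋃ m : ℕ, {x | 1 / (m + 1 : ℝ) ≤ |φ (single x)|} :=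
    fun x hx => by
      obtain ⟨m, hm⟩ := exists_nat_one_div_lt (abs_pos.2 hx)
      exact Set.mem_iUnion.2 ⟨m, hm.le⟩
  exact (Set.countable_iUnion fun m =>
    (finite_setOf_le_abs_apply_single φ (by positivity)).countable).mono hcover

theorem countable_setOf_map_single_ne_zero {ι : Type*} [Countable ι]
    (T : C₀(X, ℝ) →L[ℝ] lp (fun _ : ι => ℝ) ∞) : {x | T (single x) ≠ 0}.Countable := by
  have hcover : {x | T (single x) ≠ 0} ⊆ ⋃ i, {x | (lp.evalCLM ℝ _ ∞ i ∘L T) (single x) ≠ 0} :=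
    fun x hx => by
      obtain ⟨i, hi⟩ : ∃ i, T (single x) i ≠ 0 := by
        by_contra! h
        exact hx (lp.ext (funext h))
      exact Set.mem_iUnion.2 ⟨i, hi⟩
  exact (Set.countable_iUnion fun i => countable_setOf_apply_single_ne_zero _).mono hcover

end ZeroAtInftyContinuousMap

open ZeroAtInftyContinuousMap

/-- For uncountable `Γ`, the space `c₀(Γ)` is not isomorphic to a subspace
of `ℓ∞`. -/
theorem czero_not_embed_in_linf (Γ : Type*) [Uncountable Γ] :
    ¬∃ (T : czero Γ →L[ℝ] LInf) (c : ℝ), 0 < c ∧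
      ∀ x : czero Γ, ‖x‖ ≤ c * ‖T x‖ := by
  rintro ⟨T, c, -, hT⟩
  have hinj : {γ : Disc Γ | T (single γ) ≠ 0} = Set.univ :=
    Set.eq_univ_of_forall fun γ hzero =>
      single_ne_zero γ (norm_le_zero_iff.1 (by simpa [hzero] using hT (single γ)))
  have hcount : Countable (Disc Γ) :=
    Set.countable_univ_iff.1 (hinj ▸ countable_setOf_map_single_ne_zero T)
  exact not_countable (α := Γ) hcount
end
end
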